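/- For any minimizer (l, x) of the backbone-reduction QUBO of a satisfiable formula, the backbone assignment x is a satisfying assignment of f. -/
import Mathlib


noncomputable section

/-- Numeric value of a binary variable. -/
def ind (b : Bool) : ℝ := if b then 1 else 0

/-- The backbone-reduction QUBO for a `k`-CNF formula with `n` clauses given by
`f` (clause `i`, position `j` ↦ (variable, polarity)), over literal-occurrence
variables `l` and backbone variables `x`:
`q(l,x) = ω·(Σ same-clause pairs l·l' + Σ positive occurrences (−l·x) +
Σ negative occurrences (−l + l·x))`. -/
def backboneQUBO {V : Type*} (n k : ℕ) (f : Fin n → Fin k → V × Bool) (ω : ℝ)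
    (l : Fin n → Fin k → Bool) (x : V → Bool) : ℝ :=
  ω * ((∑ i, ∑ j, ∑ j', if j < j' then ind (l i j) * ind (l i j') else 0)
    + (∑ i, ∑ j, if (f i j).2 = true then -(ind (l i j) * ind (x (f i j).1)) else 0)
    + (∑ i, ∑ j, if (f i j).2 = false
        then -ind (l i j) + ind (l i j) * ind (x (f i j).1) else 0))

/-- A truth assignment satisfies the formula: every clause contains a true literal. -/
def Satisfies {V : Type*} {n k : ℕ} (f : Fin n → Fin k → V × Bool) (x : V → Bool) : Prop :=
  ∀ i, ∃ j, x (f i j).1 = (f i j).2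

lemma ind_nonneg (b : Bool) : 0 ≤ ind b := by cases b <;> simp [ind]

lemma ind_mul_self (b : Bool) : ind b * ind b = ind b := by cases b <;> simp [ind]

lemma comb {V : Type*} (v : V × Bool) (x : V → Bool) (a : Bool) :
    (if v.2 = true then -(ind a * ind (x v.1)) else 0)
      + (if v.2 = false then -ind a + ind a * ind (x v.1) else 0)
    = -(ind a) * (if x v.1 = v.2 then 1 else 0) := by
  rcases v with ⟨w, p⟩
  cases p <;> cases hx : x w <;> cases a <;> simp [ind, hx]

lemma backboneQUBO_eq {V : Type*} (n k : ℕ) (f : Fin n → Fin k → V × Bool) (ω : ℝ)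
    (l : Fin n → Fin k → Bool) (x : V → Bool) :
    backboneQUBO n k f ω l x
      = ω * ∑ i, ((∑ j, ∑ j', if j < j' then ind (l i j) * ind (l i j') else 0)
          + ∑ j, -(ind (l i j)) * (if x (f i j).1 = (f i j).2 then 1 else 0)) := by
  unfold backboneQUBO
  congr 1
  rw [← Finset.sum_add_distrib, ← Finset.sum_add_distrib]
  refine Finset.sum_congr rfl fun i _ => ?_
  rw [add_assoc, ← Finset.sum_add_distrib]
  congr 1
  exact Finset.sum_congr rfl fun j _ => comb (f i j) x (l i j)

lemma pair_sum (k : ℕ) (b : Fin k → Bool) :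
    2 * (∑ j, ∑ j', if j < j' then ind (b j) * ind (b j') else 0)
      = ((Finset.univ.filter (fun j => b j = true)).card : ℝ)^2
        - (Finset.univ.filter (fun j => b j = true)).card := by
  have hsum : (∑ j, ind (b j))
      = ((Finset.univ.filter (fun j => b j = true)).card : ℝ) := by
    simp [ind, Finset.sum_boole]
  have split : ∀ j j' : Fin k, ind (b j) * ind (b j')
      = (if j < j' then ind (b j) * ind (b j') else 0)
        + ((if j' < j then ind (b j) * ind (b j') else 0)
        + (if j = j' then ind (b j) * ind (b j') else 0)) := by
    intro j j'
    rcases lt_trichotomy j j' with h | h | h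
    · simp [h, lt_asymm h, h.ne]
    · subst h; simp
    · simp [h, lt_asymm h, h.ne', (lt_irrefl j')]
  have hfull : ((Finset.univ.filter (fun j => b j = true)).card : ℝ)^2
      = ∑ j, ∑ j', ind (b j) * ind (b j') := by
    rw [← hsum, sq, Finset.sum_mul_sum]
  have hswap : (∑ j, ∑ j', if j' < j then ind (b j) * ind (b j') else 0)
      = ∑ j, ∑ j', if j < j' then ind (b j) * ind (b j') else 0 := by
    rw [Finset.sum_comm]
    exact Finset.sum_congr rfl fun j _ => Finset.sum_congr rfl fun j' _ => by
      rw [mul_comm]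
  have hdiag : (∑ j, ∑ j', if j = j' then ind (b j) * ind (b j') else 0)
      = ∑ j, ind (b j) := by
    refine Finset.sum_congr rfl fun j _ => ?_
    rw [Finset.sum_ite_eq]
    simp [ind_mul_self]
  have hdecomp : (∑ j, ∑ j', ind (b j) * ind (b j'))
      = (∑ j, ∑ j', if j < j' then ind (b j) * ind (b j') else 0)
        + ((∑ j, ∑ j', if j' < j then ind (b j) * ind (b j') else 0)
        + (∑ j, ∑ j', if j = j' then ind (b j) * ind (b j') else 0)) := by
    calc (∑ j, ∑ j', ind (b j) * ind (b j'))
        = ∑ j, ∑ j', ((if j < j' then ind (b j) * ind (b j') else 0)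
            + ((if j' < j then ind (b j) * ind (b j') else 0)
            + (if j = j' then ind (b j) * ind (b j') else 0))) :=
          Finset.sum_congr rfl fun j _ => Finset.sum_congr rfl fun j' _ => split j j'
      _ = _ := by simp only [Finset.sum_add_distrib]
  rw [hfull, hdecomp, hswap, hdiag, hsum]
  ring

lemma clause_lb (k : ℕ) (b : Fin k → Bool) (s : Fin k → ℝ)
    (hs0 : ∀ j, 0 ≤ s j) (hs1 : ∀ j, s j ≤ 1) :
    -1 ≤ (∑ j, ∑ j', if j < j' then ind (b j) * ind (b j') else 0)
      + ∑ j, -(ind (b j)) * s j := by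
  set m := (Finset.univ.filter (fun j => b j = true)).card with hm
  have hsum : (∑ j, ind (b j)) = (m : ℝ) := by
    simp [ind, hm, Finset.sum_boole]
  have hB : (-(m : ℝ)) ≤ ∑ j, -(ind (b j)) * s j := by
    rw [← hsum, ← Finset.sum_neg_distrib]
    refine Finset.sum_le_sum fun j _ => ?_
    have h0 := ind_nonneg (b j)
    nlinarith [hs0 j, hs1 j]
  have hA := pair_sum k b
  rw [← hm] at hA
  have key : 0 ≤ (m : ℝ)^2 - 3*(m : ℝ) + 2 := by
    rcases le_or_gt m 1 with h | h
    · have h1 : (m : ℝ) ≤ 1 := by exact_mod_cast h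
      have h0 : (0 : ℝ) ≤ m := Nat.cast_nonneg m
      nlinarith
    · have h2 : (2 : ℝ) ≤ m := by exact_mod_cast h
      nlinarith
  linarith

/-- For a satisfiable formula, any minimizer `(l, x)` of the backbone-reduction
QUBO has a backbone assignment `x` that satisfies the formula. -/
theorem backbone_minimizer_satisfies {V : Type*} (n k : ℕ)
    (f : Fin n → Fin k → V × Bool) (ω : ℝ) (hω : 0 < ω)
    (hsat : ∃ x, Satisfies f x)
    (l : Fin n → Fin k → Bool) (x : V → Bool)
    (hmin : ∀ l' x', backboneQUBO n k f ω l x ≤ backboneQUBO n k f ω l' x') :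
    Satisfies f x := by
  classical
  obtain ⟨x0, hx0⟩ := hsat
  choose j0 hj0 using hx0
  set l0 : Fin n → Fin k → Bool := fun i j => decide (j = j0 i) with hl0
  have hval : backboneQUBO n k f ω l0 x0 = ω * (-(n : ℝ)) := by
    rw [backboneQUBO_eq]
    congr 1
    have hterm : ∀ i : Fin n,
        ((∑ j, ∑ j', if j < j' then ind (l0 i j) * ind (l0 i j') else 0)
          + ∑ j, -(ind (l0 i j)) * (if x0 (f i j).1 = (f i j).2 then 1 else 0))
        = -1 := by
      intro i
      have hA : (∑ j, ∑ j', if j < j' then ind (l0 i j) * ind (l0 i j') else 0) = 0 := by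
        refine Finset.sum_eq_zero fun j _ => Finset.sum_eq_zero fun j' _ => ?_
        split_ifs with h
        · by_cases hj : j = j0 i
          · have hj' : j' ≠ j0 i := by rw [hj] at h; exact (ne_of_gt h)
            simp [hl0, hj', ind]
          · simp [hl0, hj, ind]
        · rfl
      have hBterm : ∀ j : Fin k,
          -(ind (l0 i j)) * (if x0 (f i j).1 = (f i j).2 then 1 else 0)
            = if j = j0 i then (-1 : ℝ) else 0 := by
        intro j
        by_cases hj : j = j0 i
        · subst hj; simp [hl0, ind, hj0 i]
        · simp [hl0, hj, ind]
      rw [hA, Finset.sum_congr rfl fun j _ => hBterm j, Finset.sum_ite_eq' Finset.univ (j0 i)]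
      simp
    rw [Finset.sum_congr rfl fun i _ => hterm i]
    simp
  have hle : (∑ i, ((∑ j, ∑ j', if j < j' then ind (l i j) * ind (l i j') else 0)
        + ∑ j, -(ind (l i j)) * (if x (f i j).1 = (f i j).2 then 1 else 0)))
      ≤ -(n : ℝ) := by
    have h := hmin l0 x0
    rw [backboneQUBO_eq n k f ω l x, hval] at h
    exact le_of_mul_le_mul_left h hω
  intro i
  by_contra hcon
  push_neg at hcon
  have hbound : ∀ i' : Fin n, (-1 : ℝ)
      ≤ (∑ j, ∑ j', if j < j' then ind (l i' j) * ind (l i' j') else 0)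
        + ∑ j, -(ind (l i' j)) * (if x (f i' j).1 = (f i' j).2 then 1 else 0) := by
    intro i'
    exact clause_lb k (l i') _ (fun j => by positivity) (fun j => by split <;> norm_num)
  have hi : (0 : ℝ)
      ≤ (∑ j, ∑ j', if j < j' then ind (l i j) * ind (l i j') else 0)
        + ∑ j, -(ind (l i j)) * (if x (f i j).1 = (f i j).2 then 1 else 0) := by
    have hA : (0 : ℝ) ≤ ∑ j, ∑ j', if j < j' then ind (l i j) * ind (l i j') else 0 := by
      refine Finset.sum_nonneg fun j _ => Finset.sum_nonneg fun j' _ => ?_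
      split
      · exact mul_nonneg (ind_nonneg _) (ind_nonneg _)
      · exact le_refl 0
    have hB : (∑ j, -(ind (l i j)) * (if x (f i j).1 = (f i j).2 then 1 else 0)) = 0 := by
      refine Finset.sum_eq_zero fun j _ => ?_
      rw [if_neg (hcon j)]
      ring
    linarith
  have hlt : (∑ _i : Fin n, (-1 : ℝ))
      < ∑ i', ((∑ j, ∑ j', if j < j' then ind (l i' j) * ind (l i' j') else 0)
        + ∑ j, -(ind (l i' j)) * (if x (f i' j).1 = (f i' j).2 then 1 else 0)) := by
    refine Finset.sum_lt_sum (fun i' _ => hbound i') ⟨i, Finset.mem_univ i, by linarith⟩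
  simp only [Finset.sum_const, Finset.card_univ, Fintype.card_fin, nsmul_eq_mul,
    mul_neg, mul_one] at hlt
  linarith
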